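/- Let K ⊆ L be a finite field extension and A a finite-dimensional L-algebra; then A is also a finite-dimensional K-algebra, and μ(A/K) ≤ μ(A/L)·μ(L/K). -/

import Mathlib

/-!
Take an `L`-bilinear algorithm `x * y = ∑ i, (φᵢ x * ψᵢ y) • wᵢ` for `A` and a `K`-bilinear
algorithm `a * b = ∑ j, (αⱼ a * βⱼ b) • vⱼ` for `L`. Expanding each product `φᵢ x * ψᵢ y ∈ L`
by the second gives `x * y = ∑ i j, (αⱼ (φᵢ x) * βⱼ (ψᵢ y)) • (vⱼ • wᵢ)`, a `K`-bilinear
algorithm for `A` of length `μ(A/L) · μ(L/K)`.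
-/

/-- The bilinear complexity of a `K`-algebra `A`. -/
noncomputable def mu (K A : Type*) [Field K] [NonUnitalNonAssocRing A] [Module K A] : ℕ :=
  sInf {n : ℕ | ∃ (φ ψ : Fin n → (A →ₗ[K] K)) (w : Fin n → A),
    ∀ x y : A, x * y = ∑ i, (φ i x * ψ i y) • w i}

def HasBilinearAlgorithm (K A : Type*) [Field K] [NonUnitalNonAssocRing A] [Module K A]
    (n : ℕ) : Prop :=
  ∃ (φ ψ : Fin n → (A →ₗ[K] K)) (w : Fin n → A), ∀ x y : A, x * y = ∑ i, (φ i x * ψ i y) • w i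

section

variable {K A : Type*} [Field K] [NonUnitalNonAssocRing A] [Module K A]

theorem hasBilinearAlgorithm_of_fintype {ι : Type*} [Fintype ι] (φ ψ : ι → A →ₗ[K] K)
    (w : ι → A) (h : ∀ x y : A, x * y = ∑ i, (φ i x * ψ i y) • w i) :
    HasBilinearAlgorithm K A (Fintype.card ι) :=
  let e := Fintype.equivFin ι
  ⟨φ ∘ e.symm, ψ ∘ e.symm, w ∘ e.symm, fun x y => (h x y).trans (e.symm.sum_comp _).symm⟩

theorem mu_le_of_hasBilinearAlgorithm {n : ℕ} (h : HasBilinearAlgorithm K A n) : mu K A ≤ n :=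
  Nat.sInf_le h

theorem hasBilinearAlgorithm_finrank_mul_finrank [IsScalarTower K A A] [SMulCommClass K A A]
    [FiniteDimensional K A] :
    HasBilinearAlgorithm K A (Module.finrank K A * Module.finrank K A) := by
  let b := Module.finBasis K A
  have h := hasBilinearAlgorithm_of_fintype (fun p : _ × _ => b.coord p.1)
    (fun p => b.coord p.2) (fun p => b p.1 * b p.2) fun x y => by
      conv_lhs => rw [← b.sum_repr x, ← b.sum_repr y]
      simp only [Fintype.sum_prod_type, Finset.sum_mul_sum, smul_mul_smul_comm, b.coord_apply]
  simpa using h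

theorem hasBilinearAlgorithm_mu [IsScalarTower K A A] [SMulCommClass K A A]
    [FiniteDimensional K A] : HasBilinearAlgorithm K A (mu K A) :=
  Nat.sInf_mem (s := {n | HasBilinearAlgorithm K A n})
    ⟨_, hasBilinearAlgorithm_finrank_mul_finrank⟩

end

theorem HasBilinearAlgorithm.tower {K L A : Type*} [Field K] [Field L] [Algebra K L]
    [NonUnitalNonAssocRing A] [Module L A] [Module K A] [IsScalarTower K L A] {m n : ℕ}
    (hA : HasBilinearAlgorithm L A m) (hL : HasBilinearAlgorithm K L n) :
    HasBilinearAlgorithm K A (m * n) := by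
  obtain ⟨φ, ψ, w, hw⟩ := hA
  obtain ⟨α, β, v, hv⟩ := hL
  have h := hasBilinearAlgorithm_of_fintype
    (fun p : Fin m × Fin n => (α p.2).comp ((φ p.1).restrictScalars K))
    (fun p => (β p.2).comp ((ψ p.1).restrictScalars K)) (fun p => v p.2 • w p.1)
    fun x y => by
      simp only [hw x y, Fintype.sum_prod_type, hv (φ _ x) (ψ _ y), Finset.sum_smul,
        smul_assoc, LinearMap.comp_apply, LinearMap.restrictScalars_apply]
  simpa using h

/-- If `K ⊆ L` is a finite field extension and `A` a finite-dimensional `L`-algebra,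
then `μ(A/K) ≤ μ(A/L) · μ(L/K)`. -/
theorem stmt_5 (K L A : Type*) [Field K] [Field L] [Algebra K L] [FiniteDimensional K L]
    [Ring A] [Algebra L A] [Algebra K A] [IsScalarTower K L A] [FiniteDimensional L A] :
    mu K A ≤ mu L A * mu K L :=
  mu_le_of_hasBilinearAlgorithm (hasBilinearAlgorithm_mu.tower hasBilinearAlgorithm_mu)
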